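/- arXiv:1605.09349 — 4 statements merged into one kernel-verified Lean document; each statement's English description precedes it below -/
import Mathlib

section
/- Let ξ be a random variable on a finite support {s_1, ..., s_k}, and let data yield counts n_1, ..., n_k summing to n with empirical frequencies p̂_i = n_i/n. For any probability vector p = (p_1, ..., p_k), the maximum of ∑_{i=1}^k ∑_{j=1}^{n_i} log(n w_{ij}) over weights w_{ij} ≥ 0 with ∑_{j=1}^{n_i} w_{ij} = p_i for each i is attained at w_{ij} = p_i/n_i, and equals ∑_{i=1}^k n_i log(n p_i/n_i). Consequently min/max of ∑_{i=1}^k h(s_i) ∑_j w_{ij} over the empirical Burg ball U_n(η) equals min/max of ∑_{i=1}^k h(s_i) p_i over {p : -∑_i p̂_i log(p_i/p̂_i) ≤ η, ∑_i p_i = 1, p_i ≥ 0}. -/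
open Finset Real

/-!
By concavity of `log` (Jensen), among positive weights `w i j` with fixed row sums `p i`
the log-likelihood `∑ i ∑ j log (n w i j)` is largest for the even split `w i j = p i / m i`,
where it equals `∑ i m i log (n p i / m i)`; and `-(1/n)` times this value is exactly the
Burg divergence `-∑ i p̂ i log (p i / p̂ i)` of the grouped weights. So every point of the
empirical ball has grouped weights in the grouped ball, and every point of the grouped ball
is the grouping of its even split, which lies in the empirical ball; both maps preserve
`∑ i h i p i`.
-/

theorem sum_log_le_card_mul_log_sum_div {ι : Type*} (s : Finset ι) {x : ι → ℝ}
    (hx : ∀ i ∈ s, 0 < x i) :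
    ∑ i ∈ s, log (x i) ≤ #s * log ((∑ i ∈ s, x i) / #s) := by
  rcases s.eq_empty_or_nonempty with rfl | hs
  · simp
  have hcard : (0 : ℝ) < #s := by exact_mod_cast hs.card_pos
  have jensen := strictConcaveOn_log_Ioi.concaveOn.le_map_sum (t := s) (w := fun _ => (#s : ℝ)⁻¹)
    (p := x) (fun _ _ => by positivity) (by simp [hcard.ne']) hx
  simp only [smul_eq_mul, ← mul_sum] at jensen
  simp only [inv_mul_eq_div] at jensen
  rwa [div_le_iff₀' hcard] at jensen

theorem sum_log_mul_le_of_sum_eq {M : ℕ} {N p : ℝ} (hN : 0 < N) {w : Fin M → ℝ}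
    (hw : ∀ j, 0 < w j) (hs : ∑ j, w j = p) :
    ∑ j, log (N * w j) ≤ M * log (N * p / M) := by
  simpa [← mul_sum, hs] using sum_log_le_card_mul_log_sum_div univ fun j _ => mul_pos hN (hw j)

theorem sum_const_div_natCast {M : ℕ} (hM : M ≠ 0) (p : ℝ) : ∑ _j : Fin M, p / M = p := by
  simp [mul_div_cancel₀, hM]

section Grouped

variable {ι : Type*} [Fintype ι] {m : ι → ℕ} {n : ℕ}

theorem sum_sum_log_mul_div_eq (p : ι → ℝ) :
    ∑ i, ∑ _j : Fin (m i), log (n * (p i / m i)) = ∑ i, m i * log (n * p i / m i) := by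
  simp [mul_div_assoc]

theorem neg_sum_mul_log_div_eq (p : ι → ℝ) :
    -∑ i, ((m i : ℝ) / n) * log (p i / ((m i : ℝ) / n))
      = -(1 / (n : ℝ)) * ∑ i, (m i : ℝ) * log (n * p i / m i) := by
  rw [mul_sum, ← sum_neg_distrib]
  refine sum_congr rfl fun i _ => ?_
  rw [div_div_eq_mul_div, mul_comm (p i)]
  ring

theorem sum_sum_log_mul_le (hm : ∀ i, 1 ≤ m i) (hn : n = ∑ i, m i)
    {w : (i : ι) → Fin (m i) → ℝ} (hw : ∀ i j, 0 < w i j) :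
    ∑ i, ∑ j, log (n * w i j) ≤ ∑ i, m i * log (n * (∑ j, w i j) / m i) := by
  refine sum_le_sum fun i _ => sum_log_mul_le_of_sum_eq ?_ (hw i) rfl
  have : m i ≤ n := hn ▸ single_le_sum (fun _ _ => Nat.zero_le _) (mem_univ i)
  exact_mod_cast (hm i).trans this

theorem image_burg_ball_eq_image_grouped_ball (hm : ∀ i, 1 ≤ m i) (hn : n = ∑ i, m i)
    (h : ι → ℝ) (η : ℝ) :
    {v : ℝ | ∃ w : (i : ι) → Fin (m i) → ℝ,
        (∀ i j, 0 < w i j) ∧ (∑ i, ∑ j, w i j = 1) ∧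
        (-(1 / (n : ℝ)) * ∑ i, ∑ j, log (n * w i j) ≤ η) ∧
        v = ∑ i, h i * ∑ j, w i j}
      = {v : ℝ | ∃ p : ι → ℝ,
        (∀ i, 0 < p i) ∧ (∑ i, p i = 1) ∧
        (-∑ i, ((m i : ℝ) / n) * log (p i / ((m i : ℝ) / n)) ≤ η) ∧
        v = ∑ i, h i * p i} := by
  have hm₀ : ∀ i, m i ≠ 0 := fun i => Nat.one_le_iff_ne_zero.mp (hm i)
  ext v
  constructor
  · rintro ⟨w, hw, hw_sum, hw_ball, rfl⟩
    refine ⟨fun i => ∑ j, w i j, fun i => ?_, hw_sum, ?_, rfl⟩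
    · have : Nonempty (Fin (m i)) := ⟨⟨0, hm i⟩⟩
      exact sum_pos (fun j _ => hw i j) univ_nonempty
    · rw [neg_sum_mul_log_div_eq]
      refine le_trans (mul_le_mul_of_nonpos_left (sum_sum_log_mul_le hm hn hw) ?_) hw_ball
      rw [neg_nonpos]
      positivity
  · rintro ⟨p, hp, hp_sum, hp_ball, rfl⟩
    refine ⟨fun i _ => p i / m i, fun i _ => div_pos (hp i) (by exact_mod_cast hm i), ?_, ?_, ?_⟩
    · simpa [sum_const_div_natCast (hm₀ _)] using hp_sum
    · rwa [sum_sum_log_mul_div_eq, ← neg_sum_mul_log_div_eq]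
    · simp [sum_const_div_natCast (hm₀ _)]

end Grouped

theorem empirical_ball_discrete_reduction_general (k : ℕ)
    (m : Fin k → ℕ) (hm : ∀ i, 1 ≤ m i) (n : ℕ) (hn : n = ∑ i, m i)
    (h : Fin k → ℝ) (η : ℝ) :
    (∀ p : Fin k → ℝ, (∀ i, 0 < p i) →
      (∀ w : (i : Fin k) → Fin (m i) → ℝ,
        (∀ i j, 0 < w i j) → (∀ i, ∑ j, w i j = p i) →
        ∑ i, ∑ j, Real.log (n * w i j) ≤ ∑ i, (m i : ℝ) * Real.log (n * p i / m i)) ∧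
      (∀ i, ∑ _j : Fin (m i), (p i / m i) = p i) ∧
      (∑ i, ∑ _j : Fin (m i), Real.log (n * (p i / m i))
        = ∑ i, (m i : ℝ) * Real.log (n * p i / m i))) ∧
    {v : ℝ | ∃ w : (i : Fin k) → Fin (m i) → ℝ,
        (∀ i j, 0 < w i j) ∧ (∑ i, ∑ j, w i j = 1) ∧
        (-(1 / (n : ℝ)) * ∑ i, ∑ j, Real.log (n * w i j) ≤ η) ∧
        v = ∑ i, h i * ∑ j, w i j}
      = {v : ℝ | ∃ p : Fin k → ℝ,
        (∀ i, 0 < p i) ∧ (∑ i, p i = 1) ∧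
        (-∑ i, ((m i : ℝ) / n) * Real.log (p i / ((m i : ℝ) / n)) ≤ η) ∧
        v = ∑ i, h i * p i} := by
  refine ⟨fun p _ => ⟨fun w hw hw_sum => ?_, fun i => ?_, sum_sum_log_mul_div_eq p⟩,
    image_burg_ball_eq_image_grouped_ball hm hn h η⟩
  · simpa only [hw_sum] using sum_sum_log_mul_le hm hn hw
  · exact sum_const_div_natCast (Nat.one_le_iff_ne_zero.mp (hm i)) (p i)

/-- Reduction of the empirical Burg ball DRO to the grouped (histogram) form.
With counts `m i ≥ 1` on `k` support points summing to `n`: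
(1) For any probability vector `p` with positive entries, the maximum of
`∑ i ∑ j log (n * w i j)` over positive weights with row sums `∑ j w i j = p i`
is attained at `w i j = p i / m i`, and equals `∑ i m i * log (n * p i / m i)`.
(2) Consequently, the set of values `∑ i h(s_i) ∑ j w i j` over the empirical Burg
ball `U_n(η)` equals the set of values `∑ i h(s_i) p i` over
`{p : -∑ i p̂ i * log (p i / p̂ i) ≤ η, ∑ p i = 1, p i > 0}` with `p̂ i = m i / n`. -/
theorem empirical_ball_discrete_reduction (k : ℕ) (hk : 1 ≤ k)
    (m : Fin k → ℕ) (hm : ∀ i, 1 ≤ m i) (n : ℕ) (hn : n = ∑ i, m i)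
    (h : Fin k → ℝ) (η : ℝ) (hη : 0 < η) :
    (∀ p : Fin k → ℝ, (∀ i, 0 < p i) →
      (∀ w : (i : Fin k) → Fin (m i) → ℝ,
        (∀ i j, 0 < w i j) → (∀ i, ∑ j, w i j = p i) →
        ∑ i, ∑ j, Real.log (n * w i j) ≤ ∑ i, (m i : ℝ) * Real.log (n * p i / m i)) ∧
      (∀ i, ∑ _j : Fin (m i), (p i / m i) = p i) ∧
      (∑ i, ∑ _j : Fin (m i), Real.log (n * (p i / m i))
        = ∑ i, (m i : ℝ) * Real.log (n * p i / m i))) ∧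
    {v : ℝ | ∃ w : (i : Fin k) → Fin (m i) → ℝ,
        (∀ i j, 0 < w i j) ∧ (∑ i, ∑ j, w i j = 1) ∧
        (-(1 / (n : ℝ)) * ∑ i, ∑ j, Real.log (n * w i j) ≤ η) ∧
        v = ∑ i, h i * ∑ j, w i j}
      = {v : ℝ | ∃ p : Fin k → ℝ,
        (∀ i, 0 < p i) ∧ (∑ i, p i = 1) ∧
        (-∑ i, ((m i : ℝ) / n) * Real.log (p i / ((m i : ℝ) / n)) ≤ η) ∧
        v = ∑ i, h i * p i} :=
  empirical_ball_discrete_reduction_general k m hm n hn h η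
end

section
/- Let h̃_1, ..., h̃_n be real numbers with min_i h̃_i < 0 < max_i h̃_i. Then there exists λ ∈ (-1/max_i h̃_i, -1/min_i h̃_i) such that ∑_{i=1}^n h̃_i/(1 + λ h̃_i) = 0 and 1 + λ h̃_i > 0 for all i. -/
/-!
Write `F(λ) = ∑ hᵢ / (1 + λ hᵢ)`, continuous on `(-1/max h, -1/min h)`, where all denominators
are positive. For `λ ≤ 0` every term satisfies `hᵢ / (1 + λ hᵢ) ≥ hᵢ`, so `F(λ)` is at least a
constant plus `M / (1 + λ M)` with `M = max h`, which blows up as `λ ↓ -1/M`. The other endpoint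
follows by the symmetry `F_{-h}(-λ) = -F_h(λ)`, and the intermediate value theorem gives a zero.
-/

open Finset Filter Topology

variable {ι : Type*} [Fintype ι]

/-- The derivative of the empirical log-likelihood `λ ↦ ∑ log (1 + λ hᵢ)`. -/
noncomputable def elScore (h : ι → ℝ) (lam : ℝ) : ℝ := ∑ i, h i / (1 + lam * h i)

lemma elScore_neg (h : ι → ℝ) (lam : ℝ) : elScore (-h) (-lam) = -elScore h lam := by
  simp only [elScore, Pi.neg_apply, neg_mul_neg, neg_div, Finset.sum_neg_distrib]

lemma continuousOn_elScore (h : ι → ℝ) :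
    ContinuousOn (elScore h) {lam | ∀ i, 0 < 1 + lam * h i} :=
  continuousOn_finsetSum _ fun i _ =>
    continuousOn_const.div (by fun_prop) fun _ hlam => (hlam i).ne'

lemma one_add_mul_pos_of_neg_one_div_lt {M lam : ℝ} (hM : 0 < M) (hlam : -1 / M < lam) :
    0 < 1 + lam * M := by
  rw [div_lt_iff₀ hM] at hlam
  linarith

lemma one_add_mul_pos_of_mem_Ioo {m M x lam : ℝ} (hm : m < 0) (hM : 0 < M)
    (hx : x ∈ Set.Icc m M) (hlam : lam ∈ Set.Ioo (-1 / M) (-1 / m)) : 0 < 1 + lam * x := by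
  have hlamM := one_add_mul_pos_of_neg_one_div_lt hM hlam.1
  have hlamm : -1 < lam * m := (lt_div_iff_of_neg hm).1 hlam.2
  rcases le_total 0 lam with hl | hl
  · nlinarith [mul_le_mul_of_nonneg_left hx.1 hl]
  · nlinarith [mul_le_mul_of_nonpos_left hx.2 hl]

lemma le_div_one_add_mul {x lam : ℝ} (hlam : lam ≤ 0) (hx : 0 < 1 + lam * x) :
    x ≤ x / (1 + lam * x) := by
  rw [le_div_iff₀ hx]
  nlinarith [mul_nonpos_of_nonpos_of_nonneg hlam (sq_nonneg x)]

lemma sum_sub_add_div_le_elScore {h : ι → ℝ} {lam : ℝ} (hlam : lam ≤ 0)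
    (hpos : ∀ i, 0 < 1 + lam * h i) (j : ι) :
    ∑ i, h i - h j + h j / (1 + lam * h j) ≤ elScore h lam := by
  have hgap := Finset.single_le_sum (f := fun i => h i / (1 + lam * h i) - h i)
    (fun i _ => sub_nonneg.2 (le_div_one_add_mul hlam (hpos i))) (mem_univ j)
  simp only [Finset.sum_sub_distrib] at hgap
  unfold elScore
  linarith

lemma tendsto_div_one_add_mul_nhdsGT {M : ℝ} (hM : 0 < M) :
    Tendsto (fun lam => M / (1 + lam * M)) (𝓝[>] (-1 / M)) atTop := by
  have hden : Tendsto (fun lam => 1 + lam * M) (𝓝[>] (-1 / M)) (𝓝[>] 0) := by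
    have := ((by fun_prop : Continuous fun lam => 1 + lam * M).continuousWithinAt
      (s := Set.Ioi (-1 / M)) (x := -1 / M)).tendsto_nhdsWithin (t := Set.Ioi 0)
      fun _ hlam => one_add_mul_pos_of_neg_one_div_lt hM hlam
    rwa [div_mul_cancel₀ _ hM.ne', add_neg_cancel] at this
  simpa only [div_eq_mul_inv, Function.comp_def] using
    (tendsto_inv_nhdsGT_zero.comp hden).const_mul_atTop hM

lemma tendsto_elScore_nhdsGT {h : ι → ℝ} {M : ℝ} (hM : 0 < M) (hle : ∀ i, h i ≤ M) {j : ι}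
    (hj : h j = M) : Tendsto (elScore h) (𝓝[>] (-1 / M)) atTop := by
  refine tendsto_atTop_mono' _ ?_
    ((tendsto_div_one_add_mul_nhdsGT hM).atTop_add (tendsto_const_nhds (x := ∑ i, h i - M)))
  filter_upwards [Ioo_mem_nhdsGT (div_neg_of_neg_of_pos neg_one_lt_zero hM)] with lam hlam
  have hlamM := one_add_mul_pos_of_neg_one_div_lt hM hlam.1
  have hpos : ∀ i, 0 < 1 + lam * h i := fun i => by
    nlinarith [mul_le_mul_of_nonpos_left (hle i) hlam.2.le]
  have := sum_sub_add_div_le_elScore hlam.2.le hpos j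
  rw [hj] at this
  linarith

lemma tendsto_elScore_nhdsLT {h : ι → ℝ} {m : ℝ} (hm : m < 0) (hle : ∀ i, m ≤ h i) {j : ι}
    (hj : h j = m) : Tendsto (elScore h) (𝓝[<] (-1 / m)) atBot := by
  have hnegh := tendsto_elScore_nhdsGT (h := -h) (neg_pos.2 hm) (fun i => neg_le_neg (hle i))
    (j := j) (by simp [hj])
  have hflip : Tendsto Neg.neg (𝓝[<] (-1 / m)) (𝓝[>] (-1 / -m)) := by
    simpa [div_neg] using (tendsto_neg_nhdsLT (a := -1 / m))
  have := tendsto_neg_atTop_atBot.comp (hnegh.comp hflip)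
  simpa [Function.comp_def, elScore_neg] using this

theorem el_multiplier_exists_general (n : ℕ) (h : Fin n → ℝ)
    (hne : (Finset.univ : Finset (Fin n)).Nonempty)
    (hmax : 0 < univ.sup' hne h) (hmin : univ.inf' hne h < 0) :
    ∃ lam : ℝ, lam ∈ Set.Ioo (-1 / univ.sup' hne h) (-1 / univ.inf' hne h) ∧
      (∑ i, h i / (1 + lam * h i) = 0) ∧ (∀ i, 0 < 1 + lam * h i) := by
  set M := univ.sup' hne h
  set m := univ.inf' hne h
  have hpos : ∀ lam ∈ Set.Ioo (-1 / M) (-1 / m), ∀ i, 0 < 1 + lam * h i := fun lam hlam i =>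
    one_add_mul_pos_of_mem_Ioo hmin hmax ⟨inf'_le h (mem_univ i), le_sup' h (mem_univ i)⟩ hlam
  have hlt : -1 / M < -1 / m :=
    (div_neg_of_neg_of_pos neg_one_lt_zero hmax).trans (div_pos_of_neg_of_neg neg_one_lt_zero hmin)
  obtain ⟨j, -, hj⟩ := exists_mem_eq_sup' hne h
  obtain ⟨k, -, hk⟩ := exists_mem_eq_inf' hne h
  obtain ⟨lam, hlam, hzero⟩ := ((continuousOn_elScore h).mono hpos).surjOn_of_tendsto'
    (Set.nonempty_Ioo.2 hlt)
    (by
      rw [tendsto_comp_coe_Ioo_atBot hlt]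
      exact tendsto_elScore_nhdsGT hmax (fun i => le_sup' h (mem_univ i)) hj.symm)
    (by
      rw [tendsto_comp_coe_Ioo_atTop hlt]
      exact tendsto_elScore_nhdsLT hmin (fun i => inf'_le h (mem_univ i)) hk.symm)
    (Set.mem_univ 0)
  exact ⟨lam, hlam, hzero, hpos lam hlam⟩

/-- Existence of the empirical likelihood Lagrange multiplier: if
`min_i h̃_i < 0 < max_i h̃_i`, there exists `λ` strictly between `-1/max_i h̃_i`
and `-1/min_i h̃_i` with `∑ i, h̃_i / (1 + λ h̃_i) = 0` and `1 + λ h̃_i > 0` for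
all `i`. -/
theorem el_multiplier_exists (n : ℕ) (hn : 1 ≤ n) (h : Fin n → ℝ)
    (hne : (Finset.univ : Finset (Fin n)).Nonempty)
    (hmax : 0 < univ.sup' hne h) (hmin : univ.inf' hne h < 0) :
    ∃ lam : ℝ, lam ∈ Set.Ioo (-1 / univ.sup' hne h) (-1 / univ.inf' hne h) ∧
      (∑ i, h i / (1 + lam * h i) = 0) ∧ (∀ i, 0 < 1 + lam * h i) :=
  el_multiplier_exists_general n h hne hmax hmin
end

section
/- Let h̃_1, ..., h̃_n be real numbers, λ ∈ ℝ with 1 + λh̃_i > 0 for all i and ∑_i h̃_i/(1 + λh̃_i) = 0. Let h̄ = (1/n)∑_i h̃_i and s = (1/n)∑_i h̃_i². Then h̄ = λ·(1/n)∑_i h̃_i²/(1 + λh̃_i), and consequently |λ|·(s - |h̄|·max_i |h̃_i|) ≤ |h̄|. -/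
open Finset

/- Since `h̃ = h̃ / (1 + λ h̃) + λ h̃² / (1 + λ h̃)`, summing and using the root equation gives
`∑ h̃ = λ ∑ h̃² / (1 + λ h̃)`. Each summand on the right is nonnegative and its denominator is at
most `1 + |λ| max |h̃|`, so `|∑ h̃| ≥ |λ| ∑ h̃² / (1 + |λ| max |h̃|)`. -/

lemma eq_div_add_mul_sq_div {x lam : ℝ} (hx : 1 + lam * x ≠ 0) :
    x = x / (1 + lam * x) + lam * (x ^ 2 / (1 + lam * x)) := by
  rw [mul_div_assoc', ← add_div, eq_div_iff hx]
  ring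

lemma sum_eq_mul_sum_sq_div_of_sum_div_eq_zero {ι : Type*} (s : Finset ι) {h : ι → ℝ} {lam : ℝ}
    (hne : ∀ i ∈ s, 1 + lam * h i ≠ 0) (hroot : ∑ i ∈ s, h i / (1 + lam * h i) = 0) :
    ∑ i ∈ s, h i = lam * ∑ i ∈ s, h i ^ 2 / (1 + lam * h i) := by
  calc ∑ i ∈ s, h i
      = ∑ i ∈ s, (h i / (1 + lam * h i) + lam * (h i ^ 2 / (1 + lam * h i))) :=
        sum_congr rfl fun i hi => eq_div_add_mul_sq_div (hne i hi)
    _ = lam * ∑ i ∈ s, h i ^ 2 / (1 + lam * h i) := by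
        rw [sum_add_distrib, hroot, zero_add, mul_sum]

lemma sq_le_one_add_abs_mul_mul_sq_div {x lam M : ℝ} (hpos : 0 < 1 + lam * x) (hx : |x| ≤ M) :
    x ^ 2 ≤ (1 + |lam| * M) * (x ^ 2 / (1 + lam * x)) := by
  have hden : 1 + lam * x ≤ 1 + |lam| * M :=
    calc 1 + lam * x ≤ 1 + |lam| * |x| := by rw [← abs_mul]; linarith [le_abs_self (lam * x)]
      _ ≤ 1 + |lam| * M := by gcongr
  calc x ^ 2 = (1 + lam * x) * (x ^ 2 / (1 + lam * x)) := (mul_div_cancel₀ _ hpos.ne').symm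
    _ ≤ (1 + |lam| * M) * (x ^ 2 / (1 + lam * x)) := by gcongr

lemma abs_mul_sum_sq_le_abs_sum_mul {ι : Type*} (s : Finset ι) {h : ι → ℝ} {lam M : ℝ}
    (hpos : ∀ i ∈ s, 0 < 1 + lam * h i) (hM : ∀ i ∈ s, |h i| ≤ M)
    (hroot : ∑ i ∈ s, h i / (1 + lam * h i) = 0) :
    |lam| * ∑ i ∈ s, h i ^ 2 ≤ |∑ i ∈ s, h i| * (1 + |lam| * M) := by
  have hq : 0 ≤ ∑ i ∈ s, h i ^ 2 / (1 + lam * h i) :=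
    sum_nonneg fun i hi => div_nonneg (sq_nonneg _) (hpos i hi).le
  have habs : |∑ i ∈ s, h i| = |lam| * ∑ i ∈ s, h i ^ 2 / (1 + lam * h i) := by
    rw [sum_eq_mul_sum_sq_div_of_sum_div_eq_zero s (fun i hi => (hpos i hi).ne') hroot,
      abs_mul, abs_of_nonneg hq]
  have hsq : ∑ i ∈ s, h i ^ 2 ≤ (1 + |lam| * M) * ∑ i ∈ s, h i ^ 2 / (1 + lam * h i) := by
    rw [mul_sum]
    exact sum_le_sum fun i hi => sq_le_one_add_abs_mul_mul_sq_div (hpos i hi) (hM i hi)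
  rw [habs]
  linarith [mul_le_mul_of_nonneg_left hsq (abs_nonneg lam)]

theorem el_multiplier_bound_general (n : ℕ) (h : Fin n → ℝ)
    (hne : (Finset.univ : Finset (Fin n)).Nonempty)
    (lam : ℝ) (hpos : ∀ i, 0 < 1 + lam * h i)
    (hroot : ∑ i, h i / (1 + lam * h i) = 0) :
    (1 / (n : ℝ)) * ∑ i, h i
      = lam * ((1 / (n : ℝ)) * ∑ i, (h i) ^ 2 / (1 + lam * h i)) ∧
    |lam| * ((1 / (n : ℝ)) * ∑ i, (h i) ^ 2
        - |(1 / (n : ℝ)) * ∑ i, h i| * univ.sup' hne (fun i => |h i|))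
      ≤ |(1 / (n : ℝ)) * ∑ i, h i| := by
  have hsum := sum_eq_mul_sum_sq_div_of_sum_div_eq_zero univ (fun i _ => (hpos i).ne') hroot
  have hM : ∀ i ∈ univ, |h i| ≤ univ.sup' hne (fun i => |h i|) :=
    fun i hi => le_sup' (fun i => |h i|) hi
  have key := abs_mul_sum_sq_le_abs_sum_mul univ (fun i _ => hpos i) hM hroot
  have hc : 0 ≤ 1 / (n : ℝ) := by positivity
  refine ⟨by rw [hsum]; ring, ?_⟩
  rw [abs_mul, abs_of_nonneg hc]
  linarith [mul_le_mul_of_nonneg_left key hc]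

/-- Empirical likelihood Lagrange multiplier bound: if `1 + λ h̃_i > 0` for all `i`
and `∑ i, h̃_i/(1 + λ h̃_i) = 0`, then with `h̄ = (1/n) ∑ h̃_i` and
`s = (1/n) ∑ h̃_i²`, one has `h̄ = λ (1/n) ∑ h̃_i²/(1 + λ h̃_i)` and
`|λ| (s - |h̄| max_i |h̃_i|) ≤ |h̄|`. -/
theorem el_multiplier_bound (n : ℕ) (hn : 1 ≤ n) (h : Fin n → ℝ)
    (hne : (Finset.univ : Finset (Fin n)).Nonempty)
    (lam : ℝ) (hpos : ∀ i, 0 < 1 + lam * h i)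
    (hroot : ∑ i, h i / (1 + lam * h i) = 0) :
    (1 / (n : ℝ)) * ∑ i, h i
      = lam * ((1 / (n : ℝ)) * ∑ i, (h i) ^ 2 / (1 + lam * h i)) ∧
    |lam| * ((1 / (n : ℝ)) * ∑ i, (h i) ^ 2
        - |(1 / (n : ℝ)) * ∑ i, h i| * univ.sup' hne (fun i => |h i|))
      ≤ |(1 / (n : ℝ)) * ∑ i, h i| :=
  el_multiplier_bound_general n h hne lam hpos hroot
end

section
/- Let h_1, ..., h_n be real numbers with sample mean ĥ = (1/n)∑_i h_i and sample variance σ̂² = (1/n)∑_i (h_i - ĥ)² > 0, and let q > 0. Suppose max_i |h_i - ĥ|·√q/(√n·σ̂) < 1. Then the weights w_i = (1/n)(1 + (h_i - ĥ)√q/(√n σ̂)·(1 - C/√n)) with 0 ≤ 1 - C/√n ≤ 1 are nonnegative, sum to 1, and satisfy ∑_i w_i h_i = ĥ + √q·σ̂/√n·(1 - C/√n). -/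
/-!
Since the deviations `h i - ĥ` sum to zero, tilting the uniform weights along them keeps the
total mass at `1` and shifts the mean by the slope times `∑ (h i - ĥ) h i = n σ̂²`. Nonnegativity
only needs the tilt `(h i - ĥ) √q / (√n σ̂)` to lie in `(-1, 1)`, which is the smallness
assumption.
-/

open Finset

section TiltedWeights

variable {ι : Type*} [Fintype ι]

theorem sum_sub_mean_eq_zero [Nonempty ι] (h : ι → ℝ) :
    ∑ i, (h i - (1 / (Fintype.card ι : ℝ)) * ∑ j, h j) = 0 := by
  have hcard : (Fintype.card ι : ℝ) ≠ 0 := Nat.cast_ne_zero.mpr Fintype.card_ne_zero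
  rw [sum_sub_distrib, sum_const, card_univ, nsmul_eq_mul]
  field_simp
  ring

theorem sum_sub_mul_self_eq_sum_sq {h : ι → ℝ} {m : ℝ} (hm : ∑ i, (h i - m) = 0) :
    ∑ i, (h i - m) * h i = ∑ i, (h i - m) ^ 2 := by
  have hsplit : ∀ i, (h i - m) * h i = (h i - m) ^ 2 + m * (h i - m) := fun i => by ring
  rw [sum_congr rfl fun i _ => hsplit i, sum_add_distrib, ← mul_sum, hm, mul_zero, add_zero]

theorem sum_tilted_weights [Nonempty ι] (h : ι → ℝ) (c : ℝ) :
    ∑ i, (1 / (Fintype.card ι : ℝ)) *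
      (1 + (h i - (1 / (Fintype.card ι : ℝ)) * ∑ j, h j) * c) = 1 := by
  have hcard : (Fintype.card ι : ℝ) ≠ 0 := Nat.cast_ne_zero.mpr Fintype.card_ne_zero
  rw [← mul_sum, sum_add_distrib, ← sum_mul, sum_sub_mean_eq_zero, sum_const, card_univ,
    nsmul_eq_mul]
  field_simp
  ring

theorem sum_tilted_weights_mul_self [Nonempty ι] (h : ι → ℝ) (c : ℝ) :
    ∑ i, (1 / (Fintype.card ι : ℝ)) *
        (1 + (h i - (1 / (Fintype.card ι : ℝ)) * ∑ j, h j) * c) * h i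
      = (1 / (Fintype.card ι : ℝ)) * ∑ j, h j
        + c * ((1 / (Fintype.card ι : ℝ)) *
          ∑ i, (h i - (1 / (Fintype.card ι : ℝ)) * ∑ j, h j) ^ 2) := by
  set m := (1 / (Fintype.card ι : ℝ)) * ∑ j, h j
  have hexpand : ∀ i, (1 / (Fintype.card ι : ℝ)) * (1 + (h i - m) * c) * h i
      = (1 / (Fintype.card ι : ℝ)) * h i
        + c * (1 / (Fintype.card ι : ℝ)) * ((h i - m) * h i) := fun i => by ring
  rw [sum_congr rfl fun i _ => hexpand i, sum_add_distrib, ← mul_sum, ← mul_sum,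
    sum_sub_mul_self_eq_sum_sq (sum_sub_mean_eq_zero h), mul_assoc]

end TiltedWeights

theorem one_add_mul_nonneg_of_abs_le_one {x t : ℝ} (hx : |x| ≤ 1) (ht₀ : 0 ≤ t)
    (ht₁ : t ≤ 1) : 0 ≤ 1 + x * t := by
  nlinarith [neg_abs_le x, mul_le_mul_of_nonneg_right hx ht₀]

theorem abs_apply_mul_div_le_sup' {ι : Type*} {s : Finset ι} (hs : s.Nonempty) (f : ι → ℝ)
    {i : ι} (hi : i ∈ s) {a b : ℝ} (ha : 0 ≤ a) (hb : 0 ≤ b) :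
    |f i * a / b| ≤ s.sup' hs (fun j => |f j|) * a / b := by
  rw [abs_div, abs_mul, abs_of_nonneg ha, abs_of_nonneg hb]
  gcongr
  exact le_sup' (fun j => |f j|) hi

theorem tilted_weights_value_general (n : ℕ) (hn : 1 ≤ n) (h : Fin n → ℝ)
    (hne : (Finset.univ : Finset (Fin n)).Nonempty)
    (hbar σ q C : ℝ)
    (hhbar : hbar = (1 / (n : ℝ)) * ∑ i, h i)
    (hσ : σ = Real.sqrt ((1 / (n : ℝ)) * ∑ i, (h i - hbar) ^ 2))
    (hσpos : 0 < (1 / (n : ℝ)) * ∑ i, (h i - hbar) ^ 2)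
    (hC0 : 0 ≤ 1 - C / Real.sqrt n) (hC1 : 1 - C / Real.sqrt n ≤ 1)
    (hsmall : univ.sup' hne (fun i => |h i - hbar|) * Real.sqrt q
        / (Real.sqrt n * σ) < 1) :
    (∀ i, 0 ≤ (1 / (n : ℝ)) * (1 + (h i - hbar) * Real.sqrt q
        / (Real.sqrt n * σ) * (1 - C / Real.sqrt n))) ∧
    (∑ i, (1 / (n : ℝ)) * (1 + (h i - hbar) * Real.sqrt q
        / (Real.sqrt n * σ) * (1 - C / Real.sqrt n)) = 1) ∧
    (∑ i, ((1 / (n : ℝ)) * (1 + (h i - hbar) * Real.sqrt q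
        / (Real.sqrt n * σ) * (1 - C / Real.sqrt n))) * h i
      = hbar + Real.sqrt q * σ / Real.sqrt n * (1 - C / Real.sqrt n)) := by
  have : Nonempty (Fin n) := ⟨⟨0, hn⟩⟩
  have hσ₀ : 0 < σ := hσ ▸ Real.sqrt_pos.mpr hσpos
  have hslope : ∀ i, (1 / (n : ℝ)) * (1 + (h i - hbar) * Real.sqrt q
      / (Real.sqrt n * σ) * (1 - C / Real.sqrt n))
      = (1 / (n : ℝ)) * (1 + (h i - hbar) * (Real.sqrt q / (Real.sqrt n * σ)
        * (1 - C / Real.sqrt n))) := fun i => by ring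
  refine ⟨fun i => ?_, ?_, ?_⟩
  · refine mul_nonneg (by positivity) (one_add_mul_nonneg_of_abs_le_one ?_ hC0 hC1)
    exact (abs_apply_mul_div_le_sup' hne (fun j => h j - hbar) (mem_univ i)
      (Real.sqrt_nonneg q) (by positivity)).trans hsmall.le
  · simp_rw [hslope]
    subst hhbar
    simpa only [Fintype.card_fin] using sum_tilted_weights h _
  · simp_rw [hslope]
    subst hhbar
    have hmean := sum_tilted_weights_mul_self h (Real.sqrt q / (Real.sqrt n * σ)
      * (1 - C / Real.sqrt n))
    simp only [Fintype.card_fin] at hmean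
    rw [hmean, ← Real.sq_sqrt hσpos.le, ← hσ]
    field_simp

/-- Primal feasible weights achieve mean shifted by roughly `√q σ̂ / √n`:
with `ĥ` the sample mean, `σ̂` the sample standard deviation (assumed positive),
`q > 0`, `0 ≤ 1 - C/√n ≤ 1`, and `max_i |h_i - ĥ| √q / (√n σ̂) < 1`, the weights
`w_i = (1/n)(1 + (h_i - ĥ)√q/(√n σ̂)(1 - C/√n))` are nonnegative, sum to 1, and
satisfy `∑ w_i h_i = ĥ + √q σ̂ / √n · (1 - C/√n)`. -/
theorem tilted_weights_value (n : ℕ) (hn : 1 ≤ n) (h : Fin n → ℝ)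
    (hne : (Finset.univ : Finset (Fin n)).Nonempty)
    (hbar σ q C : ℝ)
    (hhbar : hbar = (1 / (n : ℝ)) * ∑ i, h i)
    (hσ : σ = Real.sqrt ((1 / (n : ℝ)) * ∑ i, (h i - hbar) ^ 2))
    (hσpos : 0 < (1 / (n : ℝ)) * ∑ i, (h i - hbar) ^ 2)
    (hq : 0 < q)
    (hC0 : 0 ≤ 1 - C / Real.sqrt n) (hC1 : 1 - C / Real.sqrt n ≤ 1)
    (hsmall : univ.sup' hne (fun i => |h i - hbar|) * Real.sqrt q
        / (Real.sqrt n * σ) < 1) :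
    (∀ i, 0 ≤ (1 / (n : ℝ)) * (1 + (h i - hbar) * Real.sqrt q
        / (Real.sqrt n * σ) * (1 - C / Real.sqrt n))) ∧
    (∑ i, (1 / (n : ℝ)) * (1 + (h i - hbar) * Real.sqrt q
        / (Real.sqrt n * σ) * (1 - C / Real.sqrt n)) = 1) ∧
    (∑ i, ((1 / (n : ℝ)) * (1 + (h i - hbar) * Real.sqrt q
        / (Real.sqrt n * σ) * (1 - C / Real.sqrt n))) * h i
      = hbar + Real.sqrt q * σ / Real.sqrt n * (1 - C / Real.sqrt n)) :=
  tilted_weights_value_general n hn h hne hbar σ q C hhbar hσ hσpos hC0 hC1 hsmall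
end
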